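/- arXiv:1404.6841 — 3 statements merged into one kernel-verified Lean document; each statement's English description precedes it below -/
import Mathlib

section
/- Let Q be an m×m real symmetric matrix with eigendecomposition Q = AΛAᵀ (A orthogonal, eigenvalues λ_1 ≥ ... ≥ λ_m), and fix 0 ≤ d ≤ m. Then the rank-d orthogonal projection matrix P minimizing ‖Q − P‖_F over all rank-d symmetric idempotents is P = BBᵀ, where B consists of the eigenvectors of Q corresponding to the d largest eigenvalues. -/
/-!
Expanding the square, `‖Q - P‖_F² = ‖Q‖_F² - 2 ⟨Q, P⟩ + tr P` for every symmetric idempotent `P`,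
and `tr P = rank P = d`, so the claim is that `P = B Bᵀ` maximises `⟨Q, P⟩`. Conjugating by `A`,
`⟨Q, P⟩ = ∑ λᵢ sᵢ` where `sᵢ` are the diagonal entries of the symmetric idempotent `Aᵀ P A`:
they lie in `[0, 1]` (since `sᵢ = ∑ⱼ (Aᵀ P A)ᵢⱼ²`) and sum to `d`. For such weights,
`∑ λᵢ sᵢ ≤ λ₁ + ⋯ + λ_d`, with equality for `B Bᵀ`, whose weights are `1` on the first `d`
indices and `0` elsewhere.
-/

open Matrix BigOperators

noncomputable def frobNorm {m : ℕ} (A : Matrix (Fin m) (Fin m) ℝ) : ℝ :=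
  Real.sqrt (∑ i, ∑ j, (A i j) ^ 2)

open Finset

theorem sum_mul_le_sum_of_forall_notMem_le {ι : Type*} [Fintype ι] {lam s : ι → ℝ}
    {T : Finset ι} (hsep : ∀ i ∈ T, ∀ j ∉ T, lam j ≤ lam i)
    (hs : ∀ i, s i ∈ Set.Icc 0 1) (hsum : ∑ i, s i = #T) :
    ∑ i, lam i * s i ≤ ∑ i ∈ T, lam i := by
  classical
  obtain ⟨t, hT, hTc⟩ : ∃ t, (∀ i ∈ T, t ≤ lam i) ∧ ∀ j ∉ T, lam j ≤ t := by
    rcases T.eq_empty_or_nonempty with rfl | hT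
    · obtain ⟨t, ht⟩ := (Set.finite_range lam).bddAbove
      exact ⟨t, by simp, fun j _ => ht (Set.mem_range_self j)⟩
    · exact ⟨T.inf' hT lam, fun i hi => inf'_le lam hi,
        fun j hj => le_inf' hT lam (hsep · · j hj)⟩
  have hpointwise : ∀ i, (lam i - t) * s i ≤ if i ∈ T then lam i - t else 0 := by
    intro i
    split_ifs with hi
    · exact mul_le_of_le_one_right (sub_nonneg.2 (hT i hi)) (hs i).2
    · exact mul_nonpos_of_nonpos_of_nonneg (sub_nonpos.2 (hTc i hi)) (hs i).1
  have hsum_le := sum_le_sum fun i (_ : i ∈ univ) => hpointwise i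
  simp only [sub_mul, sum_sub_distrib, ← mul_sum, hsum, sum_ite_mem, univ_inter, sum_const,
    nsmul_eq_mul] at hsum_le
  linarith

namespace Matrix

variable {n κ R : Type*} [Fintype n]

theorem trace_eq_rank_of_isIdempotentElem [DecidableEq n] [Field R] {P : Matrix n n R}
    (hP : IsIdempotentElem P) : P.trace = P.rank := by
  have hP' : IsIdempotentElem (toLin' P) := hP.map toLinAlgEquiv'
  rw [← trace_toLin'_eq, (LinearMap.IsIdempotentElem.isProj_range _ hP').trace]
  rfl

section CommRing

variable [CommRing R]

section Idempotent

variable {P : Matrix n n R} (hPt : Pᵀ = P) (hP : IsIdempotentElem P)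
include hPt hP

theorem diag_eq_sum_sq_of_transpose_eq (i : n) : P i i = ∑ j, P i j ^ 2 := by
  conv_lhs => rw [← hP.eq, mul_apply]
  refine sum_congr rfl fun j _ => ?_
  rw [sq, ← transpose_apply P j i, hPt]

theorem diag_mem_Icc_of_transpose_eq [LinearOrder R] [IsStrictOrderedRing R] (i : n) :
    P i i ∈ Set.Icc 0 1 := by
  have hrow := diag_eq_sum_sq_of_transpose_eq hPt hP i
  have hnonneg : 0 ≤ P i i := hrow ▸ sum_nonneg fun j _ => sq_nonneg _
  have hsq : P i i ^ 2 ≤ P i i :=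
    (single_le_sum (f := fun j => P i j ^ 2) (fun j _ => sq_nonneg _) (mem_univ i)).trans_eq
      hrow.symm
  exact ⟨hnonneg, by nlinarith⟩

theorem sum_sum_sq_eq_trace : ∑ i, ∑ j, P i j ^ 2 = P.trace :=
  sum_congr rfl fun i _ => (diag_eq_sum_sq_of_transpose_eq hPt hP i).symm

theorem sum_sum_sub_sq_eq (Q : Matrix n n R) :
    ∑ i, ∑ j, (Q - P) i j ^ 2 =
      ∑ i, ∑ j, Q i j ^ 2 - 2 * ∑ i, ∑ j, Q i j * P i j + P.trace := by
  simp only [← sum_sum_sq_eq_trace hPt hP, sub_apply, sub_sq, sum_add_distrib, sum_sub_distrib,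
    mul_sum, mul_assoc]

end Idempotent

theorem sum_sum_conj_diagonal_mul [DecidableEq n] (A P : Matrix n n R) (lam : n → R) :
    ∑ i, ∑ j, (A * diagonal lam * Aᵀ) i j * P i j = ∑ i, lam i * (Aᵀ * P * A) i i := by
  have hsymm : (A * diagonal lam * Aᵀ)ᵀ = A * diagonal lam * Aᵀ := by
    simp [transpose_mul, mul_assoc]
  calc ∑ i, ∑ j, (A * diagonal lam * Aᵀ) i j * P i j
      = (P * (A * diagonal lam * Aᵀ)ᵀ).trace := by
        simp only [trace, diag_apply, mul_apply, transpose_apply, mul_comm]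
    _ = (Aᵀ * P * A * diagonal lam).trace := by
        rw [hsymm, ← mul_assoc, ← mul_assoc, trace_mul_comm, ← mul_assoc, ← mul_assoc]
    _ = ∑ i, lam i * (Aᵀ * P * A) i i := by
        simp only [trace, diag_apply, mul_diagonal, mul_comm]

variable {A : Matrix n n R}

theorem transpose_conj_eq {P : Matrix n n R} (hPt : Pᵀ = P) : (Aᵀ * P * A)ᵀ = Aᵀ * P * A := by
  simp [transpose_mul, hPt, mul_assoc]

theorem isIdempotentElem_conj [DecidableEq n] {P : Matrix n n R} (hA : A * Aᵀ = 1)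
    (hP : IsIdempotentElem P) : IsIdempotentElem (Aᵀ * P * A) := by
  calc Aᵀ * P * A * (Aᵀ * P * A) = Aᵀ * P * (A * Aᵀ) * P * A := by simp only [mul_assoc]
    _ = Aᵀ * P * A := by rw [hA, mul_one, mul_assoc Aᵀ P P, hP.eq]

theorem trace_conj_of_mul_transpose_eq_one [DecidableEq n] (P : Matrix n n R)
    (hA : A * Aᵀ = 1) :
    (Aᵀ * P * A).trace = P.trace := by
  rw [trace_mul_cycle, hA, one_mul]

section Submatrix

variable [DecidableEq n] (e : κ ↪ n) (hA : Aᵀ * A = 1)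
include hA

theorem transpose_mul_submatrix_self [DecidableEq κ] :
    (A.submatrix id e)ᵀ * A.submatrix id e = 1 := by
  rw [transpose_submatrix, ← submatrix_mul _ _ _ _ _ Function.bijective_id, hA,
    submatrix_one_embedding]

theorem sum_diag_conj_mul_submatrix [Fintype κ] (lam : n → R) :
    ∑ i, lam i * (Aᵀ * (A.submatrix id e * (A.submatrix id e)ᵀ) * A) i i = ∑ k, lam (e k) := by
  have hE : Aᵀ * A.submatrix id e = (1 : Matrix n n R).submatrix id e := by rw [← hA]; rfl
  have h : Aᵀ * (A.submatrix id e * (A.submatrix id e)ᵀ) * A =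
      (1 : Matrix n n R).submatrix id e * ((1 : Matrix n n R).submatrix id e)ᵀ := by
    rw [← hE, transpose_mul, transpose_transpose]
    simp only [Matrix.mul_assoc]
  rw [h]
  simp only [mul_apply, transpose_apply, submatrix_apply, id, one_apply, mul_ite, mul_one,
    mul_zero, mul_sum]
  rw [sum_comm]
  simp

end Submatrix

section MulTranspose

variable [Fintype κ] [DecidableEq κ] {B : Matrix n κ R} (hB : Bᵀ * B = 1)
include hB

theorem isIdempotentElem_mul_transpose : IsIdempotentElem (B * Bᵀ) := by
  calc B * Bᵀ * (B * Bᵀ) = B * (Bᵀ * B) * Bᵀ := by simp only [Matrix.mul_assoc]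
    _ = B * Bᵀ := by rw [hB, Matrix.mul_one]

theorem trace_mul_transpose : (B * Bᵀ).trace = Fintype.card κ := by
  rw [trace_mul_comm, hB, trace_one]

end MulTranspose

end CommRing

end Matrix

/-- Let `Q = A Λ Aᵀ` be an eigendecomposition of a real symmetric matrix (`A`
orthogonal, `Λ` diagonal with decreasing diagonal). Then the projection `P = B Bᵀ`
onto the span of the eigenvectors of the `d` largest eigenvalues (the first `d`
columns of `A`) attains the minimum of `‖Q − R‖_F` over all rank-`d` symmetric
idempotent matrices `R`. -/
theorem closest_rank_d_projection {m d : ℕ} (hd : d ≤ m)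
    (A Λ : Matrix (Fin m) (Fin m) ℝ)
    (hA : Aᵀ * A = 1) (hA' : A * Aᵀ = 1)
    (hdiag : ∀ i j, i ≠ j → Λ i j = 0)
    (hsort : ∀ i j : Fin m, i ≤ j → Λ j j ≤ Λ i i)
    (Q : Matrix (Fin m) (Fin m) ℝ) (hQ : Q = A * Λ * Aᵀ)
    (B : Matrix (Fin m) (Fin d) ℝ) (hB : B = A.submatrix id (Fin.castLE hd))
    (R : Matrix (Fin m) (Fin m) ℝ)
    (hR2 : R * R = R) (hRt : Rᵀ = R) (hRrank : R.rank = d) :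
    frobNorm (Q - B * Bᵀ) ≤ frobNorm (Q - R) := by
  set e := Fin.castLEEmb hd
  have hmem (i : Fin m) : i ∈ univ.map e ↔ (i : ℕ) < d := by
    simp only [mem_map, mem_univ, true_and, e, Fin.coe_castLEEmb]
    exact ⟨by rintro ⟨k, rfl⟩; exact k.2, fun h => ⟨⟨i, h⟩, rfl⟩⟩
  obtain rfl : B = A.submatrix id e := hB
  have hBB := transpose_mul_submatrix_self e hA
  have htrR : R.trace = d := by rw [trace_eq_rank_of_isIdempotentElem hR2, hRrank]
  have hweights : ∑ i, (Aᵀ * R * A) i i = #(univ.map e) := by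
    rw [card_map, card_univ, Fintype.card_fin, ← htrR, ← trace_conj_of_mul_transpose_eq_one R hA']
    rfl
  have hsep : ∀ i ∈ univ.map e, ∀ j ∉ univ.map e, Λ j j ≤ Λ i i := fun i hi j hj =>
    hsort i j (Fin.le_def.2 (by rw [hmem] at hi hj; omega))
  have key := sum_mul_le_sum_of_forall_notMem_le hsep
    (diag_mem_Icc_of_transpose_eq (transpose_conj_eq hRt) (isIdempotentElem_conj hA' hR2))
    hweights
  rw [hQ, ← (isDiag_iff_diagonal_diag Λ).mp hdiag]
  unfold frobNorm
  apply Real.sqrt_le_sqrt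
  rw [sum_sum_sub_sq_eq (by simp [transpose_mul]) (isIdempotentElem_mul_transpose hBB),
    sum_sum_sub_sq_eq hRt hR2, sum_sum_conj_diagonal_mul, sum_sum_conj_diagonal_mul,
    sum_diag_conj_mul_submatrix e hA, trace_mul_transpose hBB, Fintype.card_fin, htrR,
    ← sum_map univ e]
  simp only [diag_apply]
  linarith
end

section
/- For two m-variate Gaussian densities with the same covariance Σ and means φ¹, φ², the L¹ distance is bounded as ∫_{R^m} |N(x; φ¹, Σ) − N(x; φ², Σ)| dx ≤ √(2/π) · ‖φ¹ − φ²‖ / √(λ_min(Σ)), where λ_min(Σ) is the smallest eigenvalue of Σ. -/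
open Matrix MeasureTheory BigOperators

/-- Density of the `m`-variate Gaussian with mean `φ` and covariance `S`. -/
noncomputable def gaussDensity {m : ℕ} (φ : Fin m → ℝ)
    (S : Matrix (Fin m) (Fin m) ℝ) (x : Fin m → ℝ) : ℝ :=
  (2 * Real.pi) ^ (-(m : ℝ) / 2) * S.det ^ (-(1 : ℝ) / 2) *
    Real.exp (-(1 / 2 : ℝ) * ((x - φ) ⬝ᵥ (S⁻¹ *ᵥ (x - φ))))

/-!
Write `S = M Mᵀ` with `M = U diag(√λᵢ)` from the spectral decomposition of `S`. The substitution
`x = M z + φ₂` turns both densities into standard normal densities, one centred at `0` and one at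
`w = M⁻¹ (φ₁ - φ₂)`, where `λ_min ‖w‖² ≤ ‖φ₁ - φ₂‖²`. A rotation moves `w` onto the first axis;
there both densities factor over the coordinates, and everything reduces to the one-dimensional
bound `∫ |p(t - c) - p(t)| dt ≤ 2 c p(0) = √(2/π) c` for the standard normal density `p`, which
holds for every even integrable `p` that decreases on `[0, ∞)`.
-/

open Set ProbabilityTheory Real

theorem Matrix.mulVec_dotProduct_mulVec {ι κ R : Type*} [Fintype ι] [Fintype κ] [CommSemiring R]
    (A : Matrix κ ι R) (x y : ι → R) : (A *ᵥ x) ⬝ᵥ (A *ᵥ y) = x ⬝ᵥ ((Aᵀ * A) *ᵥ y) := by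
  rw [← mulVec_mulVec, dotProduct_mulVec x Aᵀ, vecMul_transpose]

theorem Matrix.PosDef.exists_mul_transpose_eq_of_le_eigenvalues {ι : Type*} [Fintype ι]
    [DecidableEq ι] {S : Matrix ι ι ℝ} (hS : S.PosDef) {lam : ℝ}
    (hmin : ∀ i, lam ≤ hS.1.eigenvalues i) :
    ∃ M : Matrix ι ι ℝ, M * Mᵀ = S ∧ ∀ w, lam * (w ⬝ᵥ w) ≤ (M *ᵥ w) ⬝ᵥ (M *ᵥ w) := by
  have hUU := Unitary.coe_star_mul_self hS.1.eigenvectorUnitary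
  have hspec := hS.1.spectral_theorem
  have hd := hS.eigenvalues_pos
  simp only [Unitary.conjStarAlgAut_apply, RCLike.ofReal_real_eq_id, Function.id_comp,
    star_eq_conjTranspose, conjTranspose_eq_transpose_of_trivial] at hUU hspec
  generalize (hS.1.eigenvectorUnitary : Matrix ι ι ℝ) = U at hUU hspec
  generalize hS.1.eigenvalues = d at hmin hd hspec
  set D := diagonal fun i ↦ √(d i)
  have hDD : D * Dᵀ = diagonal d := by
    rw [diagonal_transpose, diagonal_mul_diagonal]
    exact congrArg diagonal (funext fun i ↦ mul_self_sqrt (hd i).le)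
  refine ⟨U * D, ?_, fun w ↦ ?_⟩
  · rw [transpose_mul, Matrix.mul_assoc, ← Matrix.mul_assoc D, hDD, hspec, Matrix.mul_assoc]
  · rw [mulVec_dotProduct_mulVec, transpose_mul, Matrix.mul_assoc, ← Matrix.mul_assoc Uᵀ, hUU,
      Matrix.one_mul, ← mulVec_dotProduct_mulVec]
    simp only [D, mulVec_diagonal, dotProduct, Finset.mul_sum]
    refine Finset.sum_le_sum fun i _ ↦ ?_
    rw [mul_mul_mul_comm, mul_self_sqrt (hd i).le]
    exact mul_le_mul_of_nonneg_right (hmin i) (mul_self_nonneg _)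

theorem Matrix.mulVec_dotProduct_inv_mul_transpose_mulVec {ι : Type*} [Fintype ι] [DecidableEq ι]
    {M : Matrix ι ι ℝ} (hM : IsUnit M.det) (u : ι → ℝ) :
    (M *ᵥ u) ⬝ᵥ ((M * Mᵀ)⁻¹ *ᵥ (M *ᵥ u)) = u ⬝ᵥ u := by
  have hMt : IsUnit Mᵀ.det := by rwa [det_transpose]
  rw [mul_inv_rev, mulVec_mulVec, Matrix.mul_assoc, nonsing_inv_mul _ hM, Matrix.mul_one,
    ← vecMul_transpose, ← dotProduct_mulVec, mulVec_mulVec, mul_nonsing_inv _ hMt, one_mulVec]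

theorem exists_mem_orthogonalGroup_mulVec_single_one {n : ℕ} {u : Fin (n + 1) → ℝ}
    (hu : u ⬝ᵥ u = 1) : ∃ Q ∈ orthogonalGroup (Fin (n + 1)) ℝ, Q *ᵥ Pi.single 0 1 = u := by
  have hnorm : ‖WithLp.toLp 2 u‖ = 1 := by
    rw [EuclideanSpace.norm_eq, ← Real.sqrt_one, ← hu]
    simp [dotProduct, sq]
  have horth : Orthonormal ℝ (({0} : Set (Fin (n + 1))).domRestrict fun _ ↦ WithLp.toLp 2 u) := by
    rw [orthonormal_iff_ite]
    rintro ⟨i, rfl⟩ ⟨j, rfl⟩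
    simp [hnorm]
  obtain ⟨b, hb⟩ := horth.exists_orthonormalBasis_extension_of_card_eq (by simp)
  refine ⟨_, (EuclideanSpace.basisFun _ ℝ).toMatrix_orthonormalBasis_mem_orthogonal b, ?_⟩
  ext i
  rw [mulVec_single_one, col_apply, Module.Basis.toMatrix_apply, hb 0 rfl]
  simp

theorem Matrix.integral_comp_mulVec_add {ι : Type*} [Fintype ι] [DecidableEq ι]
    {M : Matrix ι ι ℝ} (hM : M.det ≠ 0) (a : ι → ℝ) (f : (ι → ℝ) → ℝ) :
    ∫ z, f (M *ᵥ z + a) = |M.det|⁻¹ * ∫ x, f x := by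
  let e : (ι → ℝ) ≃L[ℝ] (ι → ℝ) :=
    (M.toLinearEquiv' (invertibleOfIsUnitDet M (isUnit_iff_ne_zero.2 hM))).toContinuousLinearEquiv
  calc ∫ z, f (M *ᵥ z + a) = ∫ x, f (x + a) ∂(Measure.map (toLin' M) volume) :=
        (e.toHomeomorph.measurableEmbedding.integral_map fun x ↦ f (x + a)).symm
    _ = |M.det|⁻¹ * ∫ x, f x := by
        rw [Real.map_matrix_volume_pi_eq_smul_volume_pi hM, integral_smul_measure,
          integral_add_right_eq_self, ENNReal.toReal_ofReal (by positivity), abs_inv, smul_eq_mul]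

theorem gaussDensity_mulVec_add {m : ℕ} {M S : Matrix (Fin m) (Fin m) ℝ} (hMS : M * Mᵀ = S)
    (hM : M.det ≠ 0) (φ a z : Fin m → ℝ) :
    gaussDensity φ S (M *ᵥ z + a) = |M.det|⁻¹ * gaussDensity (M⁻¹ *ᵥ (φ - a)) 1 z := by
  subst hMS
  have hMu : IsUnit M.det := isUnit_iff_ne_zero.2 hM
  have hdet : (M * Mᵀ).det ^ (-(1 : ℝ) / 2) = |M.det|⁻¹ := by
    rw [det_mul, det_transpose, ← abs_mul_abs_self, mul_rpow (abs_nonneg _) (abs_nonneg _),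
      ← rpow_add' (abs_nonneg _) (by norm_num)]
    norm_num [rpow_neg_one]
  have hshift : M *ᵥ z + a - φ = M *ᵥ (z - M⁻¹ *ᵥ (φ - a)) := by
    rw [mulVec_sub, mulVec_mulVec, mul_nonsing_inv _ hMu, one_mulVec]
    abel
  simp only [gaussDensity, hshift, mulVec_dotProduct_inv_mul_transpose_mulVec hMu, hdet,
    det_one, one_rpow, inv_one, one_mulVec]
  ring

theorem integral_abs_gaussDensity_sub_eq {m : ℕ} {M S : Matrix (Fin m) (Fin m) ℝ}
    (hMS : M * Mᵀ = S) (hM : M.det ≠ 0) (φ₁ φ₂ : Fin m → ℝ) :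
    ∫ x, |gaussDensity φ₁ S x - gaussDensity φ₂ S x|
      = ∫ z, |gaussDensity (M⁻¹ *ᵥ (φ₁ - φ₂)) 1 z - gaussDensity 0 1 z| := by
  have h := integral_comp_mulVec_add hM φ₂ fun x ↦ |gaussDensity φ₁ S x - gaussDensity φ₂ S x|
  simp only [gaussDensity_mulVec_add hMS hM, sub_self, mulVec_zero, ← mul_sub, abs_mul, abs_inv,
    abs_abs, integral_const_mul] at h
  exact (mul_left_cancel₀ (by positivity) h).symm

theorem gaussDensity_one_eq_prod {m : ℕ} (φ z : Fin m → ℝ) :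
    gaussDensity φ 1 z = ∏ i, gaussianPDFReal (φ i) 1 (z i) := by
  have hconst : (2 * π) ^ (-(m : ℝ) / 2) = (√(2 * π))⁻¹ ^ m := by
    rw [sqrt_eq_rpow, ← rpow_neg (by positivity), ← rpow_natCast, ← rpow_mul (by positivity)]
    ring_nf
  simp only [gaussDensity, gaussianPDFReal, hconst, det_one, one_rpow, inv_one, one_mulVec,
    Finset.prod_mul_distrib, Finset.prod_const, Finset.card_univ, Fintype.card_fin, ← exp_sum,
    dotProduct, Finset.mul_sum, NNReal.coe_one, mul_one, Pi.sub_apply]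
  congr 2
  exact Finset.sum_congr rfl fun i _ ↦ by ring

theorem setIntegral_Iic_comp_sub_right (f : ℝ → ℝ) (a c : ℝ) :
    ∫ t in Iic a, f (t - c) = ∫ t in Iic (a - c), f t := by
  have h := (measurePreserving_add_right volume c).setIntegral_preimage_emb
    (measurableEmbedding_addRight c) (fun t ↦ f (t - c)) (Iic a)
  simpa [preimage_add_const_Iic] using h.symm

theorem AntitoneOn.le_of_abs_le_of_even {g : ℝ → ℝ} (heven : ∀ t, g (-t) = g t)
    (hanti : AntitoneOn g (Ici 0)) {x y : ℝ} (h : |x| ≤ |y|) : g y ≤ g x := by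
  have habs : ∀ t, g |t| = g t := fun t ↦ by
    rcases abs_choice t with ht | ht <;> rw [ht]
    exact heven t
  rw [← habs x, ← habs y]
  exact hanti (abs_nonneg x) (abs_nonneg y) h

theorem integral_abs_comp_sub_sub_le {g : ℝ → ℝ} (hg : Integrable g) (heven : ∀ t, g (-t) = g t)
    (hanti : AntitoneOn g (Ici 0)) {c : ℝ} (hc : 0 ≤ c) :
    ∫ t, |g (t - c) - g t| ≤ 2 * c * g 0 := by
  -- `D` changes sign at `c / 2` and integrates to `0`, so the left side is twice `∫ D` over
  -- `Iic (c / 2)`, which telescopes to `∫ g` over `[-c/2, c/2]`.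
  set D := fun t ↦ g t - g (t - c)
  have hD : Integrable D := hg.sub (hg.comp_sub_right c)
  have hD_left : EqOn (fun t ↦ |g (t - c) - g t|) D (Iic (c / 2)) := fun t ht ↦ by
    have ht : t ≤ c / 2 := ht
    show |g (t - c) - g t| = g t - g (t - c)
    rw [abs_sub_comm]
    refine abs_of_nonneg (sub_nonneg.2 (hanti.le_of_abs_le_of_even heven ?_))
    exact sq_le_sq.1 (by nlinarith)
  have hD_right : EqOn (fun t ↦ |g (t - c) - g t|) (fun t ↦ -D t) (Iic (c / 2))ᶜ := fun t ht ↦ by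
    have ht : c / 2 < t := not_le.1 ht
    show |g (t - c) - g t| = -(g t - g (t - c))
    rw [neg_sub]
    refine abs_of_nonneg (sub_nonneg.2 (hanti.le_of_abs_le_of_even heven ?_))
    exact sq_le_sq.1 (by nlinarith)
  have hD_zero : ∫ t, D t = 0 := by
    simp [D, integral_sub hg (hg.comp_sub_right c), integral_sub_right_eq_self]
  have hD_Iic : ∫ t in Iic (c / 2), D t = ∫ t in (-(c / 2))..(c / 2), g t := by
    rw [integral_sub hg.integrableOn (hg.comp_sub_right c).integrableOn,
      setIntegral_Iic_comp_sub_right, show c / 2 - c = -(c / 2) by ring,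
      intervalIntegral.integral_Iic_sub_Iic hg.integrableOn hg.integrableOn]
  have hmid : ∫ t in (-(c / 2))..(c / 2), g t ≤ c * g 0 := by
    calc ∫ t in (-(c / 2))..(c / 2), g t ≤ ∫ t in (-(c / 2))..(c / 2), g 0 :=
          intervalIntegral.integral_mono_on (by linarith) hg.intervalIntegrable
            intervalIntegrable_const fun t _ ↦ hanti.le_of_abs_le_of_even heven (by simp)
      _ = c * g 0 := by simp
  have hA : Integrable fun t ↦ |g (t - c) - g t| := ((hg.comp_sub_right c).sub hg).abs
  rw [← integral_add_compl (s := Iic (c / 2)) measurableSet_Iic hD] at hD_zero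
  calc ∫ t, |g (t - c) - g t|
      = (∫ t in Iic (c / 2), |g (t - c) - g t|) + ∫ t in (Iic (c / 2))ᶜ, |g (t - c) - g t| :=
        (integral_add_compl (s := Iic (c / 2)) measurableSet_Iic hA).symm
    _ = 2 * ∫ t in Iic (c / 2), D t := by
        rw [setIntegral_congr_fun measurableSet_Iic hD_left,
          setIntegral_congr_fun measurableSet_Iic.compl hD_right, integral_neg]
        linarith
    _ ≤ 2 * c * g 0 := by rw [hD_Iic]; linarith

theorem two_mul_inv_sqrt_two_mul_pi : 2 * (√(2 * π))⁻¹ = √(2 / π) := by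
  have h2 : √2 * √2 = 2 := mul_self_sqrt zero_le_two
  have hπ : 0 < √π := sqrt_pos.2 pi_pos
  rw [sqrt_mul zero_le_two, sqrt_div zero_le_two]
  field_simp
  linarith

theorem gaussianPDFReal_zero_neg (v : NNReal) (t : ℝ) :
    gaussianPDFReal 0 v (-t) = gaussianPDFReal 0 v t := by
  simp [gaussianPDFReal]

theorem antitoneOn_gaussianPDFReal_zero (v : NNReal) : AntitoneOn (gaussianPDFReal 0 v) (Ici 0) :=
  fun x hx y _ hxy ↦ by
    simp only [gaussianPDFReal, sub_zero]
    gcongr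

theorem integral_abs_gaussianPDFReal_sub_le {c : ℝ} (hc : 0 ≤ c) :
    ∫ t, |gaussianPDFReal c 1 t - gaussianPDFReal 0 1 t| ≤ √(2 / π) * c := by
  have h := integral_abs_comp_sub_sub_le (integrable_gaussianPDFReal 0 1)
    (gaussianPDFReal_zero_neg 1) (antitoneOn_gaussianPDFReal_zero 1) hc
  simp only [gaussianPDFReal_sub, zero_add] at h
  convert h using 1
  rw [← two_mul_inv_sqrt_two_mul_pi]
  simp [gaussianPDFReal]
  ring

theorem integral_abs_gaussDensity_single_sub_le {n : ℕ} {c : ℝ} (hc : 0 ≤ c) :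
    ∫ z : Fin (n + 1) → ℝ, |gaussDensity (Pi.single 0 c) 1 z - gaussDensity 0 1 z|
      ≤ √(2 / π) * c := by
  let f : Fin (n + 1) → ℝ → ℝ :=
    Fin.cons (fun t ↦ |gaussianPDFReal c 1 t - gaussianPDFReal 0 1 t|)
      fun _ ↦ gaussianPDFReal 0 1
  have hprod : ∀ z : Fin (n + 1) → ℝ,
      |gaussDensity (Pi.single 0 c) 1 z - gaussDensity 0 1 z| = ∏ i, f i (z i) := fun z ↦ by
    simp only [gaussDensity_one_eq_prod, Fin.prod_univ_succ, f, Fin.cons_zero, Fin.cons_succ,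
      Pi.single_apply, Fin.succ_ne_zero, if_true, if_false, Pi.zero_apply]
    rw [← sub_mul, abs_mul, abs_of_nonneg (Finset.prod_nonneg fun i _ ↦ gaussianPDFReal_nonneg ..)]
  calc ∫ z : Fin (n + 1) → ℝ, |gaussDensity (Pi.single 0 c) 1 z - gaussDensity 0 1 z|
      = ∏ i, ∫ t, f i t := by
        simp_rw [hprod]
        exact integral_fintype_prod_eq_prod f
    _ = ∫ t, |gaussianPDFReal c 1 t - gaussianPDFReal 0 1 t| := by
        simp [Fin.prod_univ_succ, f, integral_gaussianPDFReal_eq_one]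
    _ ≤ √(2 / π) * c := integral_abs_gaussianPDFReal_sub_le hc

theorem integral_abs_gaussDensity_one_sub_le {m : ℕ} (v : Fin m → ℝ) :
    ∫ z, |gaussDensity v 1 z - gaussDensity 0 1 z| ≤ √(2 / π) * √(v ⬝ᵥ v) := by
  obtain rfl | hv := eq_or_ne v 0
  · simp
  obtain ⟨n, rfl⟩ : ∃ n, m = n + 1 :=
    Nat.exists_eq_succ_of_ne_zero fun hm ↦ hv (by subst hm; exact Subsingleton.elim _ _)
  set c := √(v ⬝ᵥ v)
  have hvv : 0 < v ⬝ᵥ v :=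
    lt_of_le_of_ne (by simpa using dotProduct_self_star_nonneg v)
      (Ne.symm (dotProduct_self_eq_zero.not.2 hv))
  have hc : c * c = v ⬝ᵥ v := mul_self_sqrt hvv.le
  have hc0 : c ≠ 0 := (sqrt_pos.2 hvv).ne'
  obtain ⟨Q, hQ, hQv⟩ := exists_mem_orthogonalGroup_mulVec_single_one (u := c⁻¹ • v) (by
    rw [smul_dotProduct, dotProduct_smul, ← hc, smul_eq_mul, smul_eq_mul]
    field_simp)
  have hQQ : Q * Qᵀ = 1 := (mem_orthogonalGroup_iff _ _).1 hQ
  have hQdet : Q.det ≠ 0 := fun h ↦ by simpa [h] using congrArg det hQQ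
  have hQinv : Q⁻¹ *ᵥ v = Pi.single 0 c := by
    have hsingle : Pi.single (0 : Fin (n + 1)) c = c • Pi.single 0 1 := by
      ext i
      simp [Pi.single_apply]
    conv_lhs => rw [← smul_inv_smul₀ hc0 v, ← hQv, ← mulVec_smul, ← hsingle]
    rw [mulVec_mulVec, nonsing_inv_mul _ (isUnit_iff_ne_zero.2 hQdet), one_mulVec]
  rw [integral_abs_gaussDensity_sub_eq hQQ hQdet v 0, sub_zero, hQinv]
  exact integral_abs_gaussDensity_single_sub_le (sqrt_nonneg _)

theorem gaussian_mean_shift_L1_bound_general {m : ℕ}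
    (φ₁ φ₂ : Fin m → ℝ) (S : Matrix (Fin m) (Fin m) ℝ) (hS : S.PosDef)
    (lammin : ℝ) (hlam : 0 < lammin)
    (hmin : ∀ i, lammin ≤ hS.1.eigenvalues i) :
    ∫ x : Fin m → ℝ, |gaussDensity φ₁ S x - gaussDensity φ₂ S x|
      ≤ Real.sqrt (2 / Real.pi) * Real.sqrt (∑ i, (φ₁ i - φ₂ i) ^ 2) / Real.sqrt lammin := by
  obtain ⟨M, hMS, hM_lam⟩ := hS.exists_mul_transpose_eq_of_le_eigenvalues hmin
  have hM : M.det ≠ 0 := fun h ↦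
    hS.det_pos.ne' (by rw [← hMS, det_mul, det_transpose, h, zero_mul])
  set w := M⁻¹ *ᵥ (φ₁ - φ₂)
  have hw : lammin * (w ⬝ᵥ w) ≤ ∑ i, (φ₁ i - φ₂ i) ^ 2 := by
    simpa [w, mulVec_mulVec, mul_nonsing_inv _ (isUnit_iff_ne_zero.2 hM), dotProduct, sq]
      using hM_lam w
  rw [integral_abs_gaussDensity_sub_eq hMS hM, mul_div_assoc, ← sqrt_div' _ hlam.le]
  calc _ ≤ √(2 / π) * √(w ⬝ᵥ w) := integral_abs_gaussDensity_one_sub_le w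
    _ ≤ √(2 / π) * √((∑ i, (φ₁ i - φ₂ i) ^ 2) / lammin) := by
        gcongr
        rw [le_div_iff₀ hlam]
        linarith

/-- The `L¹` distance between two Gaussians with the same covariance `S` and means
`φ₁, φ₂` is bounded by `√(2/π) ‖φ₁ − φ₂‖ / √(λ_min(S))`. -/
theorem gaussian_mean_shift_L1_bound {m : ℕ}
    (φ₁ φ₂ : Fin m → ℝ) (S : Matrix (Fin m) (Fin m) ℝ) (hS : S.PosDef)
    (lammin : ℝ) (hlam : 0 < lammin)
    (hmin : ∀ i, lammin ≤ hS.1.eigenvalues i)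
    (hmin' : ∃ i, lammin = hS.1.eigenvalues i) :
    ∫ x : Fin m → ℝ, |gaussDensity φ₁ S x - gaussDensity φ₂ S x|
      ≤ Real.sqrt (2 / Real.pi) * Real.sqrt (∑ i, (φ₁ i - φ₂ i) ^ 2) / Real.sqrt lammin :=
  gaussian_mean_shift_L1_bound_general φ₁ φ₂ S hS lammin hlam hmin
end

section
/- Let Σ₁, Σ₂ be symmetric positive definite m×m matrices with Σ₁⁻¹ − Σ₂⁻¹ positive semidefinite (equivalently Σ₂ − Σ₁ PSD). Then for any mean φ, ∫ |N(x; φ, Σ₁) − N(x; φ, Σ₂)| dx ≤ 2(det(Σ₂)^{1/2} − det(Σ₁)^{1/2}) / det(Σ₁)^{1/2}. -/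
/-!
Write `pᵢ = gaussDensity φ Sᵢ` and `c = √det S₁ / √det S₂`. Since `S₁⁻¹ - S₂⁻¹` is positive
semidefinite, the Gaussian factor of `p₁` is pointwise below that of `p₂`, and the normalising
constants turn this into `c * p₁ ≤ p₂`. For two probability densities this forces `c ≤ 1` and
`|p₁ - p₂| ≤ p₁ + p₂ - 2 c p₁`, so the `L¹` distance is at most
`2 (1 - c) = 2 (√det S₂ - √det S₁) / √det S₂`.
-/

open Matrix MeasureTheory BigOperators

section GaussianIntegral

variable {ι : Type*} [Fintype ι]

theorem exp_neg_half_dotProduct_self (y : ι → ℝ) :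
    Real.exp (-(1 / 2) * (y ⬝ᵥ y)) = ∏ i, Real.exp (-(1 / 2) * y i ^ 2) := by
  rw [← Real.exp_sum, dotProduct, Finset.mul_sum]
  simp only [sq]

theorem integrable_exp_neg_half_dotProduct_self :
    Integrable fun y : ι → ℝ => Real.exp (-(1 / 2) * (y ⬝ᵥ y)) := by
  simp only [exp_neg_half_dotProduct_self]
  exact Integrable.fintype_prod (f := fun _ t => Real.exp (-(1 / 2) * t ^ 2))
    fun _ => integrable_exp_neg_mul_sq (by norm_num)

theorem integral_exp_neg_half_dotProduct_self :
    ∫ y : ι → ℝ, Real.exp (-(1 / 2) * (y ⬝ᵥ y)) = √(2 * Real.pi) ^ Fintype.card ι := by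
  simp only [exp_neg_half_dotProduct_self]
  rw [volume_pi, integral_fintype_prod_eq_pow (fun t : ℝ => Real.exp (-(1 / 2) * t ^ 2)),
    integral_gaussian]
  congr 2
  ring

theorem dotProduct_transpose_mul_self_mulVec (B : Matrix ι ι ℝ) (x : ι → ℝ) :
    x ⬝ᵥ ((Bᵀ * B) *ᵥ x) = (B *ᵥ x) ⬝ᵥ (B *ᵥ x) := by
  rw [← mulVec_mulVec, dotProduct_mulVec, vecMul_transpose]

theorem exp_neg_half_dotProduct_mulVec_le {A B : Matrix ι ι ℝ}
    (hAB : (A - B).PosSemidef) (v : ι → ℝ) :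
    Real.exp (-(1 / 2) * (v ⬝ᵥ (A *ᵥ v))) ≤ Real.exp (-(1 / 2) * (v ⬝ᵥ (B *ᵥ v))) := by
  have h := hAB.dotProduct_mulVec_nonneg v
  rw [star_trivial, sub_mulVec, dotProduct_sub, sub_nonneg] at h
  exact Real.exp_le_exp.mpr (by linarith)

variable [DecidableEq ι] {M : Matrix ι ι ℝ}

theorem Matrix.PosSemidef.exists_eq_transpose_mul_self {A : Matrix ι ι ℝ}
    (hA : A.PosSemidef) : ∃ B : Matrix ι ι ℝ, A = Bᵀ * B := by
  open scoped MatrixOrder in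
  exact CStarAlgebra.nonneg_iff_eq_star_mul_self.mp hA.nonneg

theorem Matrix.PosDef.det_ne_zero_of_transpose_mul_self {B : Matrix ι ι ℝ}
    (hB : (Bᵀ * B).PosDef) : B.det ≠ 0 := by
  simpa [det_mul, det_transpose, mul_self_eq_zero] using hB.det_pos.ne'

theorem measurableEmbedding_toLin' (hM : M.det ≠ 0) : MeasurableEmbedding (toLin' M) :=
  ((toLin' M).equivOfDetNeZero (by rwa [LinearMap.det_toLin'])).toContinuousLinearEquiv
    |>.toHomeomorph.measurableEmbedding

theorem integrable_comp_mulVec_iff (hM : M.det ≠ 0) {f : (ι → ℝ) → ℝ} :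
    Integrable (fun x => f (M *ᵥ x)) ↔ Integrable f := by
  have h := (measurableEmbedding_toLin' hM).integrable_map_iff (μ := volume) (g := f)
  rw [Real.map_matrix_volume_pi_eq_smul_volume_pi hM,
    integrable_smul_measure (by simpa using hM) ENNReal.ofReal_ne_top] at h
  exact h.symm

theorem integral_comp_mulVec (hM : M.det ≠ 0) (f : (ι → ℝ) → ℝ) :
    ∫ x, f (M *ᵥ x) = |M.det|⁻¹ * ∫ y, f y := by
  have hmap := Real.map_matrix_volume_pi_eq_smul_volume_pi hM
  rw [← abs_inv, ← ENNReal.toReal_ofReal (abs_nonneg M.det⁻¹), ← smul_eq_mul,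
    ← integral_smul_measure, ← hmap, (measurableEmbedding_toLin' hM).integral_map]
  rfl

theorem integrable_exp_neg_half_dotProduct_mulVec {A : Matrix ι ι ℝ} (hA : A.PosDef) :
    Integrable fun x : ι → ℝ => Real.exp (-(1 / 2) * (x ⬝ᵥ (A *ᵥ x))) := by
  obtain ⟨B, rfl⟩ := hA.posSemidef.exists_eq_transpose_mul_self
  have hB := hA.det_ne_zero_of_transpose_mul_self
  simp only [dotProduct_transpose_mul_self_mulVec]
  exact (integrable_comp_mulVec_iff hB).mpr integrable_exp_neg_half_dotProduct_self

theorem integral_exp_neg_half_dotProduct_mulVec {A : Matrix ι ι ℝ} (hA : A.PosDef) :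
    ∫ x : ι → ℝ, Real.exp (-(1 / 2) * (x ⬝ᵥ (A *ᵥ x))) =
      √(2 * Real.pi) ^ Fintype.card ι / √A.det := by
  obtain ⟨B, rfl⟩ := hA.posSemidef.exists_eq_transpose_mul_self
  have hB := hA.det_ne_zero_of_transpose_mul_self
  simp only [dotProduct_transpose_mul_self_mulVec]
  rw [integral_comp_mulVec hB fun y => Real.exp (-(1 / 2) * (y ⬝ᵥ y)),
    integral_exp_neg_half_dotProduct_self, det_mul, det_transpose, Real.sqrt_mul_self_eq_abs,
    div_eq_inv_mul]

end GaussianIntegral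

theorem Real.rpow_neg_div_two_mul_sqrt_pow {a : ℝ} (ha : 0 < a) (n : ℕ) :
    a ^ (-(n : ℝ) / 2) * √a ^ n = 1 := by
  rw [Real.sqrt_eq_rpow, ← Real.rpow_natCast, ← Real.rpow_mul ha.le, ← Real.rpow_add ha,
    show -(n : ℝ) / 2 + 1 / 2 * n = 0 by ring, Real.rpow_zero]

section GaussDensity

variable {m : ℕ} (φ : Fin m → ℝ) {S : Matrix (Fin m) (Fin m) ℝ}

theorem gaussDensity_eq (hS : S.PosDef) (x : Fin m → ℝ) :
    gaussDensity φ S x = (2 * Real.pi) ^ (-(m : ℝ) / 2) * (√S.det)⁻¹ *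
      Real.exp (-(1 / 2) * ((x - φ) ⬝ᵥ (S⁻¹ *ᵥ (x - φ)))) := by
  rw [gaussDensity, show (-(1 : ℝ) / 2) = -(1 / 2) by norm_num, Real.rpow_neg hS.det_pos.le,
    ← Real.sqrt_eq_rpow]

theorem gaussDensity_nonneg (hS : S.PosDef) (x : Fin m → ℝ) : 0 ≤ gaussDensity φ S x := by
  rw [gaussDensity_eq φ hS]
  positivity

theorem integrable_gaussDensity (hS : S.PosDef) : Integrable (gaussDensity φ S) := by
  simp only [funext (gaussDensity_eq φ hS)]
  exact ((integrable_exp_neg_half_dotProduct_mulVec hS.inv).comp_sub_right φ).const_mul _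

theorem integral_gaussDensity (hS : S.PosDef) : ∫ x, gaussDensity φ S x = 1 := by
  have hd : 0 < √S.det := Real.sqrt_pos.mpr hS.det_pos
  simp only [gaussDensity_eq φ hS]
  rw [integral_const_mul,
    integral_sub_right_eq_self (fun v => Real.exp (-(1 / 2) * (v ⬝ᵥ (S⁻¹ *ᵥ v)))) φ,
    integral_exp_neg_half_dotProduct_mulVec hS.inv, Fintype.card_fin, det_nonsing_inv,
    Ring.inverse_eq_inv', Real.sqrt_inv, div_inv_eq_mul]
  linear_combination (√S.det)⁻¹ * √S.det *
    Real.rpow_neg_div_two_mul_sqrt_pow Real.two_pi_pos m + inv_mul_cancel₀ hd.ne'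

theorem sqrt_det_mul_gaussDensity (hS : S.PosDef) (x : Fin m → ℝ) :
    √S.det * gaussDensity φ S x =
      (2 * Real.pi) ^ (-(m : ℝ) / 2) * Real.exp (-(1 / 2) * ((x - φ) ⬝ᵥ (S⁻¹ *ᵥ (x - φ)))) := by
  have hd : √S.det ≠ 0 := (Real.sqrt_pos.mpr hS.det_pos).ne'
  rw [gaussDensity_eq φ hS]
  field_simp

theorem sqrt_det_mul_gaussDensity_le {T : Matrix (Fin m) (Fin m) ℝ} (hS : S.PosDef)
    (hT : T.PosDef) (hST : (S⁻¹ - T⁻¹).PosSemidef) (x : Fin m → ℝ) :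
    √S.det * gaussDensity φ S x ≤ √T.det * gaussDensity φ T x := by
  rw [sqrt_det_mul_gaussDensity φ hS, sqrt_det_mul_gaussDensity φ hT]
  exact mul_le_mul_of_nonneg_left (exp_neg_half_dotProduct_mulVec_le hST (x - φ)) (by positivity)

end GaussDensity

section TotalVariation

variable {α : Type*} [MeasurableSpace α] {μ : Measure α} {f g : α → ℝ} {c : ℝ}

theorem le_one_of_ae_mul_le_of_integral_eq_one (hf : Integrable f μ) (hg : Integrable g μ)
    (hf₁ : ∫ x, f x ∂μ = 1) (hg₁ : ∫ x, g x ∂μ = 1) (hfg : ∀ᵐ x ∂μ, c * f x ≤ g x) :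
    c ≤ 1 :=
  calc c = ∫ x, c * f x ∂μ := by rw [integral_const_mul, hf₁, mul_one]
    _ ≤ ∫ x, g x ∂μ := integral_mono_ae (hf.const_mul c) hg hfg
    _ = 1 := hg₁

theorem integral_abs_sub_le_of_ae_mul_le (hf : Integrable f μ) (hg : Integrable g μ)
    (hf₀ : ∀ᵐ x ∂μ, 0 ≤ f x) (hf₁ : ∫ x, f x ∂μ = 1) (hg₁ : ∫ x, g x ∂μ = 1)
    (hfg : ∀ᵐ x ∂μ, c * f x ≤ g x) :
    ∫ x, |f x - g x| ∂μ ≤ 2 * (1 - c) := by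
  have hc := le_one_of_ae_mul_le_of_integral_eq_one hf hg hf₁ hg₁ hfg
  have hbound : Integrable (fun x => f x + g x - 2 * c * f x) μ :=
    (hf.add hg).sub (hf.const_mul _)
  -- `min (f, g) ≥ c f` and `|f - g| = f + g - 2 min (f, g)`
  have hpt : ∀ᵐ x ∂μ, |f x - g x| ≤ f x + g x - 2 * c * f x := by
    filter_upwards [hf₀, hfg] with x hfx hcx
    rw [abs_le]
    constructor <;> nlinarith
  calc ∫ x, |f x - g x| ∂μ ≤ ∫ x, (f x + g x - 2 * c * f x) ∂μ :=
        integral_mono_ae (hf.sub hg).abs hbound hpt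
    _ = 2 * (1 - c) := by
        rw [integral_sub (f := fun x => f x + g x) (hf.add hg) (hf.const_mul _),
          integral_add hf hg, integral_const_mul, hf₁, hg₁]
        ring

end TotalVariation

/-- For PD covariances with `S₁⁻¹ − S₂⁻¹` PSD, the `L¹` distance between Gaussians
with a common mean is at most `2(√det S₂ − √det S₁)/√det S₁`. -/
theorem gaussian_covariance_L1_bound {m : ℕ}
    (φ : Fin m → ℝ) (S₁ S₂ : Matrix (Fin m) (Fin m) ℝ)
    (hS₁ : S₁.PosDef) (hS₂ : S₂.PosDef)
    (hPSD : (S₁⁻¹ - S₂⁻¹).PosSemidef) :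
    ∫ x : Fin m → ℝ, |gaussDensity φ S₁ x - gaussDensity φ S₂ x|
      ≤ 2 * (Real.sqrt S₂.det - Real.sqrt S₁.det) / Real.sqrt S₁.det := by
  have hd₁ : 0 < √S₁.det := Real.sqrt_pos.mpr hS₁.det_pos
  have hd₂ : 0 < √S₂.det := Real.sqrt_pos.mpr hS₂.det_pos
  have hdom : ∀ x, √S₁.det / √S₂.det * gaussDensity φ S₁ x ≤ gaussDensity φ S₂ x := fun x => by
    rw [div_mul_eq_mul_div, div_le_iff₀ hd₂, mul_comm _ √S₂.det]
    exact sqrt_det_mul_gaussDensity_le φ hS₁ hS₂ hPSD x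
  have hp₁ := integrable_gaussDensity φ hS₁
  have hp₂ := integrable_gaussDensity φ hS₂
  have hi₁ := integral_gaussDensity φ hS₁
  have hi₂ := integral_gaussDensity φ hS₂
  have hdet : √S₁.det ≤ √S₂.det :=
    (div_le_one hd₂).mp (le_one_of_ae_mul_le_of_integral_eq_one hp₁ hp₂ hi₁ hi₂ (ae_of_all _ hdom))
  calc ∫ x, |gaussDensity φ S₁ x - gaussDensity φ S₂ x|
      ≤ 2 * (1 - √S₁.det / √S₂.det) := integral_abs_sub_le_of_ae_mul_le hp₁ hp₂
        (ae_of_all _ (gaussDensity_nonneg φ hS₁)) hi₁ hi₂ (ae_of_all _ hdom)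
    _ = 2 * (√S₂.det - √S₁.det) / √S₂.det := by field_simp
    _ ≤ 2 * (√S₂.det - √S₁.det) / √S₁.det := div_le_div_of_nonneg_left (by linarith) hd₁ hdet
end
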